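/- Let p ∈ [1,∞), let ρ : ℝ^N → ℝ be continuous and strictly positive with ∫_{ℝ^N} ρ(x) dx = 1, and let β > 0. Let J be nonnegative, measurable, supported in the closed unit ball with ∫ J = 1; let g : ℝ → ℝ be measurable with |g(s)| ≤ a for all s; let h : ℝ×ℝ → ℝ be any function. If u : [τ,∞) → L^p(ℝ^N,ρ) satisfies, for every t ≥ τ, u(t,x) = e^{−(t−τ)} u_τ(x) + ∫_τ^t e^{−(t−s)} g(β(J*u)(s,x) + β h(s,u(s,x))) ds, then for every t ≥ τ, ‖u(t)‖_{L^p(ℝ^N,ρ)} ≤ e^{−(t−τ)} ‖u_τ‖_{L^p(ℝ^N,ρ)} + a(1 − e^{−(t−τ)}). -/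

import Mathlib

open MeasureTheory Set
open scoped ENNReal

noncomputable section

abbrev Euc (N : ℕ) := EuclideanSpace ℝ (Fin N)

/-- Weighted `L^p` norm `(∫ ρ |u|^p)^{1/p}`. -/
def wnorm {N : ℕ} (p : ℝ) (ρ u : Euc N → ℝ) : ℝ :=
  (∫ x, ρ x * |u x| ^ p) ^ (1 / p)

/-- Convolution `(J*u)(x) = ∫ J(x-y) u(y) dy`. -/
def conv {N : ℕ} (J u : Euc N → ℝ) (x : Euc N) : ℝ :=
  ∫ y, J (x - y) * u y

/-- Membership in the weighted Lebesgue space `L^p(ℝ^N, ρ)`. -/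
def MemWLp {N : ℕ} (p : ℝ) (ρ u : Euc N → ℝ) : Prop :=
  AEStronglyMeasurable u volume ∧ Integrable fun x => ρ x * |u x| ^ p

/-- `u` satisfies the variation-of-constants identity on `[τ, ∞)` with initial datum `uτ`. -/
def IsSolution {N : ℕ} (J : Euc N → ℝ) (g : ℝ → ℝ) (h : ℝ → ℝ → ℝ) (β τ : ℝ)
    (uτ : Euc N → ℝ) (u : ℝ → Euc N → ℝ) : Prop :=
  ∀ t ≥ τ, ∀ x, u t x = Real.exp (-(t - τ)) * uτ x +
    ∫ s in τ..t, Real.exp (-(t - s)) * g (β * conv J (u s) x + β * h s (u s x))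

/-!
Since `|g| ≤ a`, the Duhamel term is bounded pointwise by `a (1 - e^{-(t-τ)})` whatever `J`, `β`
and `h` are, so `|u(t,x)| ≤ e^{-(t-τ)} |u_τ(x)| + a (1 - e^{-(t-τ)})`. Minkowski's inequality in
`L^p` of the probability measure `ρ dx`, in which constants have norm equal to their absolute
value, turns this into the norm bound.
-/

theorem abs_integral_exp_mul_le {f : ℝ → ℝ} {a τ t : ℝ} (hτt : τ ≤ t) (hf : ∀ s, |f s| ≤ a) :
    |∫ s in τ..t, Real.exp (-(t - s)) * f s| ≤ a * (1 - Real.exp (-(t - τ))) := by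
  have hbound : ∀ s, ‖Real.exp (-(t - s)) * f s‖ ≤ a * Real.exp (-(t - s)) := fun s => by
    rw [Real.norm_eq_abs, abs_mul, Real.abs_exp, mul_comm]
    exact mul_le_mul_of_nonneg_right (hf s) (Real.exp_pos _).le
  have hint : ∫ s in τ..t, a * Real.exp (-(t - s)) = a * (1 - Real.exp (-(t - τ))) := by
    simp_rw [neg_sub, Real.exp_sub]
    rw [intervalIntegral.integral_const_mul, intervalIntegral.integral_div, integral_exp,
      sub_div, div_self (Real.exp_ne_zero t)]
  calc |∫ s in τ..t, Real.exp (-(t - s)) * f s|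
      ≤ |∫ s in τ..t, a * Real.exp (-(t - s))| :=
        intervalIntegral.norm_integral_le_abs_of_norm_le (.of_forall hbound)
          (Continuous.intervalIntegrable (by fun_prop) _ _)
    _ = a * (1 - Real.exp (-(t - τ))) := by
        rw [hint, abs_of_nonneg]
        exact mul_nonneg ((abs_nonneg _).trans (hf τ))
          (sub_nonneg.2 (Real.exp_le_one_iff.2 (by linarith)))

theorem IsSolution.abs_le {N : ℕ} {J : Euc N → ℝ} {g : ℝ → ℝ} {h : ℝ → ℝ → ℝ} {β τ a t : ℝ}
    {uτ : Euc N → ℝ} {u : ℝ → Euc N → ℝ} (hsol : IsSolution J g h β τ uτ u)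
    (hga : ∀ s, |g s| ≤ a) (ht : τ ≤ t) (x : Euc N) :
    |u t x| ≤ Real.exp (-(t - τ)) * |uτ x| + a * (1 - Real.exp (-(t - τ))) := by
  rw [hsol t ht x]
  refine (abs_add_le _ _).trans (add_le_add ?_ (abs_integral_exp_mul_le ht fun s => hga _))
  rw [abs_mul, Real.abs_exp]

section WeightedNorm

variable {N : ℕ} {p : ℝ} {ρ : Euc N → ℝ}

def weightedVolume (ρ : Euc N → ℝ) : Measure (Euc N) :=
  volume.withDensity fun x => ENNReal.ofReal (ρ x)

theorem wnorm_nonneg (hρ : ∀ x, 0 ≤ ρ x) (u : Euc N → ℝ) : 0 ≤ wnorm p ρ u :=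
  Real.rpow_nonneg (integral_nonneg fun x => mul_nonneg (hρ x) (by positivity)) _

theorem isProbabilityMeasure_weightedVolume (hρ : ∀ x, 0 ≤ ρ x) (hρ1 : ∫ x, ρ x = 1) :
    IsProbabilityMeasure (weightedVolume ρ) := by
  have hρint : Integrable ρ := .of_integral_ne_zero (by simp [hρ1])
  constructor
  rw [weightedVolume, withDensity_apply _ MeasurableSet.univ, Measure.restrict_univ,
    ← ofReal_integral_eq_lintegral_ofReal hρint (.of_forall hρ), hρ1, ENNReal.ofReal_one]

theorem ofReal_wnorm_eq_eLpNorm (hp : 0 < p) (hρ : ∀ x, 0 ≤ ρ x) (hρm : AEMeasurable ρ)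
    {u : Euc N → ℝ} (hu : Integrable fun x => ρ x * |u x| ^ p) :
    ENNReal.ofReal (wnorm p ρ u) = eLpNorm u (ENNReal.ofReal p) (weightedVolume ρ) := by
  have hI : 0 ≤ ∫ x, ρ x * |u x| ^ p := integral_nonneg fun x => mul_nonneg (hρ x) (by positivity)
  rw [eLpNorm_eq_eLpNorm' (by simpa using hp) ENNReal.ofReal_ne_top, ENNReal.toReal_ofReal hp.le,
    eLpNorm'_eq_lintegral_enorm, weightedVolume,
    lintegral_withDensity_eq_lintegral_mul_non_measurable₀ _ hρm.ennreal_ofReal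
      (.of_forall fun _ => ENNReal.ofReal_lt_top),
    wnorm, ← ENNReal.ofReal_rpow_of_nonneg hI (by positivity),
    ofReal_integral_eq_lintegral_ofReal hu (.of_forall fun x => mul_nonneg (hρ x) (by positivity))]
  congr 2 with x
  rw [Pi.mul_apply, ENNReal.ofReal_mul (hρ x), Real.enorm_eq_ofReal_abs,
    ENNReal.ofReal_rpow_of_nonneg (abs_nonneg _) hp.le]

theorem wnorm_le_mul_add_of_abs_le (hp : 1 ≤ p) (hρ : ∀ x, 0 ≤ ρ x) (hρ1 : ∫ x, ρ x = 1)
    {v w : Euc N → ℝ} (hv : MemWLp p ρ v) {c b : ℝ} (hc : 0 ≤ c) (hb : 0 ≤ b)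
    (hw : ∀ x, |w x| ≤ c * |v x| + b) :
    wnorm p ρ w ≤ c * wnorm p ρ v + b := by
  have hp0 : 0 < p := one_pos.trans_le hp
  have hv0 : 0 ≤ wnorm p ρ v := wnorm_nonneg hρ v
  by_cases hw_int : Integrable fun x => ρ x * |w x| ^ p
  swap
  · -- the Bochner integral is `0` here, hence so is `wnorm p ρ w`
    rw [wnorm, integral_undef hw_int, Real.zero_rpow (one_div_ne_zero hp0.ne')]
    positivity
  have hρm : AEMeasurable ρ := (Integrable.of_integral_ne_zero (by simp [hρ1])).aemeasurable
  have := isProbabilityMeasure_weightedVolume hρ hρ1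
  have hv_meas : AEStronglyMeasurable v (weightedVolume ρ) :=
    hv.1.mono_ac (withDensity_absolutelyContinuous _ _)
  rw [← ENNReal.ofReal_le_ofReal_iff (by positivity),
    ENNReal.ofReal_add (by positivity) hb,
    ENNReal.ofReal_mul hc, ofReal_wnorm_eq_eLpNorm hp0 hρ hρm hw_int,
    ofReal_wnorm_eq_eLpNorm hp0 hρ hρm hv.2]
  calc eLpNorm w (ENNReal.ofReal p) (weightedVolume ρ)
      ≤ eLpNorm ((c • fun x => ‖v x‖) + fun _ => b) (ENNReal.ofReal p) (weightedVolume ρ) :=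
        eLpNorm_mono_real fun x => (hw x).trans_eq rfl
    _ ≤ eLpNorm (c • fun x => ‖v x‖) (ENNReal.ofReal p) (weightedVolume ρ)
          + eLpNorm (fun _ => b) (ENNReal.ofReal p) (weightedVolume ρ) :=
        eLpNorm_add_le (hv_meas.norm.const_smul c) aestronglyMeasurable_const
          (ENNReal.one_le_ofReal.2 hp)
    _ = ENNReal.ofReal c * eLpNorm v (ENNReal.ofReal p) (weightedVolume ρ) + ENNReal.ofReal b := by
        rw [eLpNorm_const _ (by simpa using hp0) (IsProbabilityMeasure.ne_zero _), measure_univ,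
          ENNReal.one_rpow, mul_one, Real.enorm_of_nonneg hb,
          eLpNorm_const_smul, eLpNorm_norm, Real.enorm_of_nonneg hc]

end WeightedNorm

theorem stmt7_general {N : ℕ} (p : ℝ) (hp : 1 ≤ p)
    (ρ : Euc N → ℝ) (hρpos : ∀ x, 0 < ρ x) (hρ1 : ∫ x, ρ x = 1)
    (β : ℝ)
    (J : Euc N → ℝ)
    (g : ℝ → ℝ) (a : ℝ) (hga : ∀ s, |g s| ≤ a)
    (h : ℝ → ℝ → ℝ)
    (τ : ℝ) (uτ : Euc N → ℝ) (huτ : MemWLp p ρ uτ)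
    (u : ℝ → Euc N → ℝ) (hsol : IsSolution J g h β τ uτ u) :
    ∀ t ≥ τ, wnorm p ρ (u t) ≤
      Real.exp (-(t - τ)) * wnorm p ρ uτ + a * (1 - Real.exp (-(t - τ))) := by
  intro t ht
  have ha : 0 ≤ a := (abs_nonneg _).trans (hga 0)
  have hdecay : 0 ≤ 1 - Real.exp (-(t - τ)) := sub_nonneg.2 (Real.exp_le_one_iff.2 (by linarith))
  exact wnorm_le_mul_add_of_abs_le hp (fun x => (hρpos x).le) hρ1 huτ (Real.exp_pos _).le
    (mul_nonneg ha hdecay) (hsol.abs_le hga ht)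

theorem stmt7 {N : ℕ} (p : ℝ) (hp : 1 ≤ p)
    (ρ : Euc N → ℝ) (hρc : Continuous ρ) (hρpos : ∀ x, 0 < ρ x) (hρ1 : ∫ x, ρ x = 1)
    (β : ℝ) (hβ : 0 < β)
    (J : Euc N → ℝ) (hJnn : ∀ x, 0 ≤ J x) (hJm : Measurable J)
    (hJsupp : ∀ x : Euc N, 1 < ‖x‖ → J x = 0) (hJ1 : ∫ x, J x = 1)
    (g : ℝ → ℝ) (hgm : Measurable g) (a : ℝ) (hga : ∀ s, |g s| ≤ a)
    (h : ℝ → ℝ → ℝ)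
    (τ : ℝ) (uτ : Euc N → ℝ) (huτ : MemWLp p ρ uτ)
    (u : ℝ → Euc N → ℝ) (hsol : IsSolution J g h β τ uτ u) :
    ∀ t ≥ τ, wnorm p ρ (u t) ≤
      Real.exp (-(t - τ)) * wnorm p ρ uτ + a * (1 - Real.exp (-(t - τ))) :=
  stmt7_general p hp ρ hρpos hρ1 β J g a hga h τ uτ huτ u hsol
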